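/- arXiv:0706.3425 — 2 statements merged into one kernel-verified Lean document; each statement's English description precedes it below -/
import Mathlib

section
/- Let φ be an automorphism of the infinite dihedral group D∞ = ℤ ⋊ ℤ/2 whose restriction to the characteristic subgroup ℤ is multiplication by -1, and suppose φ(0, 1) = (n, 1). Then for each r, the φ-twisted conjugacy class of the reflection (r, 1) is exactly {(r, 1), (n - r, 1)}; in particular each class among the reflections has at most two elements, and R(φ) = ∞. -/
def twistedConj {G : Type*} [Group G] (φ : G →* G) (a b : G) : Prop :=
  ∃ σ : G, b = σ * a * (φ σ)⁻¹

/-!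
Since `φ` inverts rotations and `φ (sr 0) = sr n`, it sends `sr j` to `sr (n - j)`. Twisting
`sr k` by a rotation `r i` gives `r i * sr k * r i = sr k`, and twisting it by any reflection gives
`sr (n - k)`. So each twisted class contains at most two of the infinitely many reflections, and
there are infinitely many classes.
-/

theorem twistedConj_equivalence {G : Type*} [Group G] (φ : G →* G) :
    Equivalence (twistedConj φ) where
  refl _ := ⟨1, by simp⟩
  symm := by
    rintro _ _ ⟨σ, rfl⟩
    exact ⟨σ⁻¹, by simp [mul_assoc]⟩
  trans := by
    rintro _ _ _ ⟨σ, rfl⟩ ⟨τ, rfl⟩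
    exact ⟨τ * σ, by simp [mul_assoc]⟩

theorem twistedConj_of_quot_mk_eq {G : Type*} [Group G] {φ : G →* G} {a b : G}
    (h : Quot.mk (twistedConj φ) a = Quot.mk (twistedConj φ) b) : twistedConj φ a b :=
  (twistedConj_equivalence φ).eqvGen_iff.mp (Quot.eqvGen_exact h)

namespace DihedralGroup

variable {m : ℕ} {φ : DihedralGroup m →* DihedralGroup m} {n : ZMod m}

theorem map_sr_of_map_r_eq_r_neg (hr : ∀ j, φ (r j) = r (-j)) (hs : φ (sr 0) = sr n)
    (j : ZMod m) : φ (sr j) = sr (n - j) := by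
  rw [← zero_add j, ← sr_mul_r, map_mul, hs, hr, sr_mul_r, zero_add, sub_eq_add_neg]

theorem twistedConj_sr_iff (hr : ∀ j, φ (r j) = r (-j)) (hs : φ (sr 0) = sr n)
    (k : ZMod m) (g : DihedralGroup m) :
    twistedConj φ (sr k) g ↔ g = sr k ∨ g = sr (n - k) := by
  constructor
  · rintro ⟨σ | i, rfl⟩
    · left
      rw [hr, inv_r, neg_neg, r_mul_sr, sr_mul_r, sub_add_cancel]
    · right
      rw [map_sr_of_map_r_eq_r_neg hr hs, inv_sr, sr_mul_sr, r_mul_sr, sub_sub_sub_cancel_right]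
  · rintro (rfl | rfl)
    · exact (twistedConj_equivalence φ).refl _
    · refine ⟨sr 0, ?_⟩
      rw [hs, inv_sr, sr_mul_sr, r_mul_sr, sub_zero]

end DihedralGroup

open DihedralGroup in
/-- Let `φ` be an automorphism of the infinite dihedral group whose restriction to the
rotation subgroup `ℤ` is `-1`, with `φ(0,1) = (n,1)`. Then the twisted conjugacy class
of each reflection `(k,1)` is exactly `{(k,1), (n-k,1)}`, and `R(φ) = ∞`. -/
theorem stmt12 (φ : MulAut (DihedralGroup 0)) (n : ZMod 0)
    (hr : ∀ j : ZMod 0, φ (DihedralGroup.r j) = DihedralGroup.r (-j))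
    (hs : φ (DihedralGroup.sr 0) = DihedralGroup.sr n) :
    (∀ k : ZMod 0, {g : DihedralGroup 0 | twistedConj φ.toMonoidHom (DihedralGroup.sr k) g} =
      {DihedralGroup.sr k, DihedralGroup.sr (n - k)}) ∧
    Infinite (Quot (twistedConj φ.toMonoidHom)) := by
  have hclass (k : ZMod 0) (g : DihedralGroup 0) :=
    twistedConj_sr_iff (φ := φ.toMonoidHom) hr hs k g
  refine ⟨fun k => Set.ext (hclass k), ?_⟩
  let reflectionClass (k : ZMod 0) : Quot (twistedConj φ.toMonoidHom) := Quot.mk _ (sr k)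
  by_contra hfin
  rw [not_infinite_iff_finite] at hfin
  obtain ⟨c, hc⟩ := Finite.exists_infinite_fiber reflectionClass
  rw [Set.infinite_coe_iff] at hc
  obtain ⟨k, hk⟩ := hc.nonempty
  have hfiber : reflectionClass ⁻¹' {c} ⊆ {k, n - k} := by
    intro j hj
    rcases (hclass k (sr j)).mp (twistedConj_of_quot_mk_eq (hk.trans hj.symm)) with h | h
    exacts [Or.inl (sr.inj h), Or.inr (sr.inj h)]
  exact hc ((Set.toFinite _).subset hfiber)
end

section
/- For every n ≥ 0, the group π₁(K) × ℤ^n, where π₁(K) = ⟨a, b | abab^{-1}⟩ is the Klein bottle group, has the R_∞ property: every automorphism has infinitely many twisted conjugacy classes. -/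
/-- The single relator of the Klein bottle group. -/
def kleinRels : Set (FreeGroup (Fin 2)) :=
  {FreeGroup.of 0 * FreeGroup.of 1 * FreeGroup.of 0 * (FreeGroup.of 1)⁻¹}

/-- The Klein bottle group `⟨a, b | a b a b⁻¹⟩`. -/
abbrev KleinGroup := PresentedGroup kleinRels

/-- The generator `a` (also called `x` or `α`). -/
def ka : KleinGroup := PresentedGroup.of 0

/-- The generator `b` (also called `y` or `β`). -/
def kb : KleinGroup := PresentedGroup.of 1

/-!
Sending `a ↦ r` and `b ↦ s` and killing `ℤⁿ` maps `π₁(K) × ℤⁿ` onto the infinite dihedral group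
`D∞ = ⟨r, s | s r s⁻¹ = r⁻¹, s² = 1⟩`. Its kernel is central (every element of `π₁(K)` is
`aⁱ bʲ`, and `b²` is central), and since `D∞` is centerless the kernel is exactly the center,
hence characteristic. So every automorphism `φ` descends to an automorphism `ψ` of `D∞`, and
`φ`-twisted classes surject onto `ψ`-twisted classes.

An automorphism of `D∞` sends `r` to `r^{±1}` and `s` to a reflection `s rᵉ`; composing with
conjugation by `s` (which only translates twisted classes) we may assume `r ↦ r`. Then the
twisted class of `rᵏ` is `{rᵏ, r^{e-k}}`, so `|2k - e|` separates infinitely many classes.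
-/

open DihedralGroup Subgroup

section TwistedConj

variable {G H : Type*} [Group G] [Group H]

theorem infinite_quot_twistedConj_of_surjective_map {φ : G →* G} {ψ : H →* H} (f : G → H)
    (hf : Function.Surjective f) (hrel : ∀ ⦃a b⦄, twistedConj φ a b → twistedConj ψ (f a) (f b))
    (hψ : Infinite (Quot (twistedConj ψ))) : Infinite (Quot (twistedConj φ)) :=
  Infinite.of_surjective _ (Quot.map_surjective hrel hf)

theorem twistedConj.map (π : G →* H) {φ : G →* G} {ψ : H →* H}
    (hπ : ∀ g, ψ (π g) = π (φ g)) {a b : G} (hab : twistedConj φ a b) :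
    twistedConj ψ (π a) (π b) := by
  obtain ⟨σ, rfl⟩ := hab
  exact ⟨π σ, by rw [map_mul, map_mul, map_inv, hπ]⟩

theorem twistedConj.mul_inv_right (g : G) {φ : G →* G} {a b : G} (hab : twistedConj φ a b) :
    twistedConj ((MulAut.conj g).toMonoidHom.comp φ) (a * g⁻¹) (b * g⁻¹) := by
  obtain ⟨σ, rfl⟩ := hab
  exact ⟨σ, by simp [mul_assoc]⟩

theorem infinite_quot_twistedConj_of_conj_comp (g : G) {φ : G →* G}
    (h : Infinite (Quot (twistedConj ((MulAut.conj g).toMonoidHom.comp φ)))) :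
    Infinite (Quot (twistedConj φ)) :=
  infinite_quot_twistedConj_of_surjective_map (· * g⁻¹) (mul_right_surjective g⁻¹)
    (fun _ _ => twistedConj.mul_inv_right g) h

theorem infinite_quot_twistedConj_of_invariant {φ : G →* G} (F : G → ℕ)
    (hF : ∀ σ a, F (σ * a * (φ σ)⁻¹) = F a) (hunbdd : ∀ N, ∃ a, N < F a) :
    Infinite (Quot (twistedConj φ)) := by
  have hlift : ∀ a b, twistedConj φ a b → F a = F b := by
    rintro a b ⟨σ, rfl⟩
    exact (hF σ a).symm
  rw [← not_finite_iff_infinite]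
  intro hfin
  obtain ⟨N, hN⟩ := (Set.range_quot_lift hlift ▸ Set.finite_range _ : (Set.range F).Finite).bddAbove
  obtain ⟨a, ha⟩ := hunbdd N
  exact ha.not_ge (hN ⟨a, rfl⟩)

theorem infinite_quot_twistedConj_of_surjective (π : G →* H) (hπ : Function.Surjective π)
    [π.ker.Characteristic] (hH : ∀ ψ : MulAut H, Infinite (Quot (twistedConj ψ.toMonoidHom)))
    (φ : MulAut G) : Infinite (Quot (twistedConj φ.toMonoidHom)) := by
  let e := QuotientGroup.quotientKerEquivOfSurjective π hπ
  let ψ : MulAut H := e.symm.trans <|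
    (QuotientGroup.congr π.ker π.ker φ (characteristic_iff_map_eq.mp ‹_› φ)).trans e
  have he : ∀ g, e.symm (π g) = g := fun g => e.symm_apply_eq.mpr rfl
  have hψ : ∀ g, ψ (π g) = π (φ g) := fun g => by
    simp only [ψ, MulEquiv.trans_apply, he]
    rfl
  exact infinite_quot_twistedConj_of_surjective_map π hπ (fun _ _ => twistedConj.map π hψ) (hH ψ)

theorem MonoidHom.ker_eq_center_of_surjective (π : G →* H) (hπ : Function.Surjective π)
    (hH : center H = ⊥) (hker : π.ker ≤ center G) : π.ker = center G := by
  refine le_antisymm hker fun z hz => ?_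
  rw [MonoidHom.mem_ker, ← mem_bot, ← hH, mem_center_iff]
  intro h
  obtain ⟨g, rfl⟩ := hπ h
  rw [← map_mul, ← map_mul, mem_center_iff.mp hz g]

end TwistedConj

section InfiniteDihedral

local notation "D∞" => DihedralGroup 0

namespace DihedralGroup

/- `ZMod 0` is `ℤ` by definition; indices are written `Int.cast k` so that both the `ZMod`
statements of Mathlib's `DihedralGroup` lemmas and the `Int.cast` simp lemmas apply. -/
theorem zero_cases (x : D∞) : (∃ k : ℤ, x = r (Int.cast k)) ∨ ∃ k : ℤ, x = sr (Int.cast k) := by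
  rcases x with k | k
  exacts [.inl ⟨k, rfl⟩, .inr ⟨k, rfl⟩]

theorem center_zero : center D∞ = ⊥ := by
  refine eq_bot_iff.mpr fun z hz => ?_
  rw [mem_center_iff] at hz
  obtain ⟨k, rfl⟩ | ⟨k, rfl⟩ := zero_cases z
  · have h := hz (sr 0)
    simp only [r_mul_sr, sr_mul_r, zero_add, zero_sub, sr.injEq] at h
    have hk : k = 0 := by
      have : k = -k := by exact_mod_cast h
      omega
    rw [hk, Int.cast_zero, r_zero]
    exact one_mem _
  · have h := hz (r 1)
    simp only [r_mul_sr, sr_mul_r, sr.injEq] at h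
    have : k - 1 = k + 1 := by exact_mod_cast h
    omega

theorem exists_mulAut_apply_r (ψ : MulAut D∞) :
    ∃ d : ℤ, ∀ k : ℤ, ψ (r (Int.cast k)) = r (Int.cast (d * k)) := by
  have hord : orderOf (ψ (r 1)) = 0 := by rw [MulEquiv.orderOf_eq, orderOf_r_one]
  obtain ⟨d, hd⟩ | ⟨c, hc⟩ := zero_cases (ψ (r 1))
  · refine ⟨d, fun k => ?_⟩
    rw [← r_one_zpow, map_zpow, hd, r_zpow, Int.cast_mul]
  · rw [hc, orderOf_sr] at hord
    exact absurd hord two_ne_zero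

theorem mulAut_apply_r_one (ψ : MulAut D∞) : ψ (r 1) = r 1 ∨ ψ (r 1) = r (-1) := by
  obtain ⟨d, hd⟩ := exists_mulAut_apply_r ψ
  obtain ⟨d', hd'⟩ := exists_mulAut_apply_r ψ.symm
  have hdd' : d * d' = 1 := by
    have h := congrArg ψ (hd' 1)
    rw [MulEquiv.apply_symm_apply, hd, mul_one] at h
    exact_mod_cast (r.inj h).symm
  rcases Int.eq_one_or_neg_one_of_mul_eq_one hdd' with rfl | rfl
  · left; simpa using hd 1
  · right; simpa using hd 1

theorem exists_mulAut_apply_sr_zero (ψ : MulAut D∞) : ∃ e : ℤ, ψ (sr 0) = sr (Int.cast e) := by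
  obtain ⟨c, hc⟩ | ⟨e, he⟩ := zero_cases (ψ (sr 0))
  · exfalso
    have hsq : r (Int.cast c) * r (Int.cast c) = (1 : D∞) := by
      rw [← hc, ← map_mul, sr_mul_self, map_one]
    rw [r_mul_r, one_def, r.injEq, ← Int.cast_add, Int.cast_eq_zero] at hsq
    have hc0 : c = 0 := by omega
    rw [hc0, Int.cast_zero, r_zero, MulEquiv.map_eq_one_iff, one_def] at hc
    cases hc
  · exact ⟨e, he⟩

def translationInvariant (e : ℤ) : D∞ → ℕ
  | r (k : ℤ) => (2 * k - e).natAbs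
  | sr _ => 0

theorem translationInvariant_r (e k : ℤ) :
    translationInvariant e (r (Int.cast k)) = (2 * k - e).natAbs :=
  rfl

theorem translationInvariant_sr (e : ℤ) (k : ZMod 0) : translationInvariant e (sr k) = 0 :=
  rfl

theorem infinite_quot_twistedConj_of_apply_r_one (ψ : D∞ →* D∞) (hr : ψ (r 1) = r 1) (e : ℤ)
    (hs : ψ (sr 0) = sr (Int.cast e)) : Infinite (Quot (twistedConj ψ)) := by
  have hr' (k : ℤ) : ψ (r (Int.cast k)) = r (Int.cast k) := by
    rw [← r_one_zpow, map_zpow, hr]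
  have hs' (k : ℤ) : ψ (sr (Int.cast k)) = sr (Int.cast (e + k)) := by
    rw [← zero_add (Int.cast k : ZMod 0), ← sr_mul_r, map_mul, hs, hr', sr_mul_r, Int.cast_add]
  refine infinite_quot_twistedConj_of_invariant (translationInvariant e) (fun σ a => ?_)
    fun N => ⟨r (Int.cast (N + e.natAbs + 1 : ℤ)), ?_⟩
  · obtain ⟨m, rfl⟩ | ⟨m, rfl⟩ := zero_cases σ <;> obtain ⟨k, rfl⟩ | ⟨k, rfl⟩ := zero_cases a <;>
      simp only [hr', hs', inv_r, inv_sr, r_mul_r, r_mul_sr, sr_mul_r, sr_mul_sr, ← Int.cast_add,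
        ← Int.cast_sub, ← Int.cast_neg, translationInvariant_r, translationInvariant_sr] <;> omega
  · rw [translationInvariant_r]
    omega

theorem infinite_quot_twistedConj_mulAut (ψ : MulAut D∞) :
    Infinite (Quot (twistedConj ψ.toMonoidHom)) := by
  obtain ⟨e, he⟩ := exists_mulAut_apply_sr_zero ψ
  rcases mulAut_apply_r_one ψ with hr | hr
  · exact infinite_quot_twistedConj_of_apply_r_one _ hr e he
  · refine infinite_quot_twistedConj_of_conj_comp (sr 0) ?_
    refine infinite_quot_twistedConj_of_apply_r_one _ ?_ (-e) ?_ <;>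
      simp [hr, he, MulAut.conj_apply, r_mul_sr, sr_mul_r, sr_mul_sr]

end DihedralGroup

end InfiniteDihedral

theorem ka_mul_kb_mul_ka_mul_kb_inv : ka * kb * ka * kb⁻¹ = 1 :=
  PresentedGroup.one_of_mem (Set.mem_singleton _)

theorem kb_mul_ka_mul_kb_inv : kb * ka * kb⁻¹ = ka⁻¹ :=
  eq_inv_of_mul_eq_one_right <| by rw [← ka_mul_kb_mul_ka_mul_kb_inv]; group

theorem kb_mul_zpow_ka (i : ℤ) : kb * ka ^ i = ka ^ (-i) * kb := by
  rw [← mul_inv_eq_iff_eq_mul, ← conj_zpow, kb_mul_ka_mul_kb_inv, inv_zpow', zpow_neg]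

theorem kb_inv_mul_zpow_ka (i : ℤ) : kb⁻¹ * ka ^ i = ka ^ (-i) * kb⁻¹ := by
  rw [inv_mul_eq_iff_eq_mul, ← mul_assoc, kb_mul_zpow_ka, neg_neg, mul_inv_cancel_right]

theorem KleinGroup.exists_eq_zpow_ka_mul_zpow_kb (g : KleinGroup) :
    ∃ i j : ℤ, g = ka ^ i * kb ^ j := by
  have hg : g ∈ closure (Set.range PresentedGroup.of) := by
    rw [PresentedGroup.closure_range_of]; exact mem_top g
  induction hg using closure_induction_left with
  | one => exact ⟨0, 0, by simp⟩
  | mul_left x hx y _ ih =>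
    obtain ⟨i, j, rfl⟩ := ih
    obtain ⟨x, rfl⟩ := hx
    fin_cases x
    · refine ⟨i + 1, j, ?_⟩
      change ka * _ = _
      rw [← mul_assoc, ← zpow_one_add, add_comm]
    · refine ⟨-i, j + 1, ?_⟩
      change kb * _ = _
      rw [← mul_assoc, kb_mul_zpow_ka, mul_assoc, ← zpow_one_add, add_comm]
  | inv_mul_cancel x hx y _ ih =>
    obtain ⟨i, j, rfl⟩ := ih
    obtain ⟨x, rfl⟩ := hx
    fin_cases x
    · refine ⟨i - 1, j, ?_⟩
      change ka⁻¹ * _ = _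
      rw [← mul_assoc, ← zpow_neg_one, ← zpow_add, neg_add_eq_sub]
    · refine ⟨-i, j - 1, ?_⟩
      change kb⁻¹ * _ = _
      rw [← mul_assoc, kb_inv_mul_zpow_ka, mul_assoc, ← zpow_neg_one, ← zpow_add, neg_add_eq_sub]

theorem kb_sq_mem_center : kb ^ 2 ∈ center KleinGroup := by
  have hka (i : ℤ) : Commute (kb ^ 2) (ka ^ i) := by
    rw [commute_iff_eq, sq, mul_assoc, kb_mul_zpow_ka, ← mul_assoc, kb_mul_zpow_ka, neg_neg,
      mul_assoc]
  rw [mem_center_iff]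
  intro g
  obtain ⟨i, j, rfl⟩ := KleinGroup.exists_eq_zpow_ka_mul_zpow_kb g
  exact ((hka i).mul_right ((Commute.refl kb).pow_left 2 |>.zpow_right j)).eq.symm

def kleinToDihedral : KleinGroup →* DihedralGroup 0 :=
  PresentedGroup.toGroup (f := ![r 1, sr 0]) <| by
    rintro _ rfl
    rfl

theorem kleinToDihedral_zpow_ka_mul_zpow_kb (i j : ℤ) :
    kleinToDihedral (ka ^ i * kb ^ j) = r (Int.cast i) * sr 0 ^ j := by
  rw [map_mul, map_zpow, map_zpow, ← r_one_zpow]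
  rfl

theorem kleinToDihedral_surjective : Function.Surjective kleinToDihedral := by
  intro x
  obtain ⟨k, rfl⟩ | ⟨k, rfl⟩ := zero_cases x
  · exact ⟨ka ^ k * kb ^ (0 : ℤ), by rw [kleinToDihedral_zpow_ka_mul_zpow_kb, zpow_zero, mul_one]⟩
  · refine ⟨ka ^ (-k) * kb ^ (1 : ℤ), ?_⟩
    rw [kleinToDihedral_zpow_ka_mul_zpow_kb, zpow_one, r_mul_sr, Int.cast_neg, zero_sub, neg_neg]

theorem ker_kleinToDihedral_le_center : kleinToDihedral.ker ≤ center KleinGroup := by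
  intro g hg
  obtain ⟨i, j, rfl⟩ := KleinGroup.exists_eq_zpow_ka_mul_zpow_kb g
  rw [MonoidHom.mem_ker, kleinToDihedral_zpow_ka_mul_zpow_kb] at hg
  obtain ⟨q, rfl | rfl⟩ := Int.even_or_odd' j
  · rw [zpow_mul, zpow_two, sr_mul_self, one_zpow, mul_one, one_def, r.injEq,
      Int.cast_eq_zero] at hg
    rw [hg, zpow_zero, one_mul, zpow_mul, zpow_two, ← sq]
    exact zpow_mem kb_sq_mem_center q
  · rw [zpow_add_one, zpow_mul, zpow_two, sr_mul_self, one_zpow, one_mul, r_mul_sr, one_def] at hg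
    cases hg

/-- For every `n ≥ 0`, the group `π₁(K) × ℤⁿ` has the `R_∞` property. -/
theorem stmt14 (n : ℕ) (φ : MulAut (KleinGroup × Multiplicative (Fin n → ℤ))) :
    Infinite (Quot (twistedConj φ.toMonoidHom)) := by
  let π := kleinToDihedral.comp (MonoidHom.fst KleinGroup (Multiplicative (Fin n → ℤ)))
  have hπ : Function.Surjective π :=
    kleinToDihedral_surjective.comp Prod.fst_surjective
  have hker : π.ker = center _ := by
    refine π.ker_eq_center_of_surjective hπ DihedralGroup.center_zero fun g hg => ?_
    rw [Subgroup.center_prod, Subgroup.mem_prod]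
    exact ⟨ker_kleinToDihedral_le_center hg, mem_center_iff.mpr fun _ => mul_comm _ _⟩
  have : π.ker.Characteristic := hker ▸ inferInstance
  exact infinite_quot_twistedConj_of_surjective π hπ
    DihedralGroup.infinite_quot_twistedConj_mulAut φ
end
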